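/- arXiv:1611.01866 — 4 statements merged into one kernel-verified Lean document; each statement's English description precedes it below -/
import Mathlib

section
/- For languages a, b, s over α, the language a∗·s·b∗ satisfies the bilateral-linear equation r = a·r + r·b + s, i.e., a∗·s·b∗ = a·(a∗·s·b∗) + (a∗·s·b∗)·b + s. -/
open Computability

/-!
Unfolding `a∗ = 1 + a * a∗` on the left and `b∗ = 1 + b∗ * b` on the right gives
`a∗ * s * b∗ ≤ a * (a∗ * s * b∗) + (a∗ * s * b∗) * b + s`; conversely every summand on the right is
absorbed into `a∗ * s * b∗` because `a * a∗ ≤ a∗`, `b∗ * b ≤ b∗` and `1 ≤ a∗, b∗`.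
-/

section KleeneAlgebra

variable {K : Type*} [KleeneAlgebra K]

theorem le_kstar_mul (a s : K) : s ≤ a∗ * s :=
  le_mul_of_one_le_left zero_le one_le_kstar

theorem le_mul_kstar (s b : K) : s ≤ s * b∗ :=
  le_mul_of_one_le_right zero_le one_le_kstar

theorem kstar_mul_eq_add (a s : K) : a∗ * s = s + a * (a∗ * s) := by
  conv_lhs => rw [← one_add_mul_kstar (a := a)]
  rw [add_mul, one_mul, mul_assoc]

theorem mul_kstar_eq_add (s b : K) : s * b∗ = s + s * b∗ * b := by
  conv_lhs => rw [← one_add_kstar_mul (a := b)]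
  rw [mul_add, mul_one, mul_assoc]

theorem kstar_mul_mul_kstar_eq (a b s : K) :
    a∗ * s * b∗ = a * (a∗ * s * b∗) + a∗ * s * b∗ * b + s := by
  refine le_antisymm ?_ (add_le (add_le ?_ ?_) ?_)
  · calc a∗ * s * b∗ = s * b∗ + a * (a∗ * s * b∗) := by
          simpa only [mul_assoc] using kstar_mul_eq_add a (s * b∗)
      _ = a * (a∗ * s * b∗) + s * b∗ * b + s := by
          nth_rw 1 [mul_kstar_eq_add s b]
          abel
      _ ≤ a * (a∗ * s * b∗) + a∗ * s * b∗ * b + s := by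
          gcongr
          exact le_kstar_mul a s
  · simp only [← mul_assoc]
    gcongr
    exact mul_kstar_le_kstar
  · rw [mul_assoc _ b∗ b]
    gcongr
    exact kstar_mul_le_kstar
  · exact (le_kstar_mul a s).trans (le_mul_kstar _ b)

end KleeneAlgebra

theorem stmt_5 {α : Type*} (a b s : Language α) :
    a∗ * s * b∗ = a * (a∗ * s * b∗) + (a∗ * s * b∗) * b + s :=
  kstar_mul_mul_kstar_eq a b s
end

section
/- If z is any language satisfying z = a·z + z·b + s, then a∗·s·b∗ ⊆ z; hence a∗·s·b∗ is the least solution of the bilateral-linear equation r = a·r + r·b + s. -/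
open Computability

theorem stmt_9 {α : Type*} (a b s z : Language α)
    (hz : z = a * z + z * b + s) :
    a∗ * s * b∗ ≤ z := by
  have haz : a * z ≤ z := by nth_rewrite 2 [hz]; exact le_add_of_le_left (le_add_of_le_left le_rfl)
  have hzb : z * b ≤ z := by nth_rewrite 2 [hz]; exact le_add_of_le_left (le_add_of_le_right le_rfl)
  have hs : s ≤ z := by rw [hz]; exact le_add_of_le_right le_rfl
  calc a∗ * s * b∗ ≤ a∗ * z * b∗ := by gcongr
    _ ≤ z * b∗ := by gcongr; exact kstar_mul_le_self haz
    _ ≤ z := mul_kstar_le_self hzb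
end

section
/- A language z satisfies z = a·z + z·b + s if and only if it satisfies z = a∗·(z·b + s). -/
open Computability

lemma arden_aux {α : Type*} (a c z : Language α) (ha : [] ∉ a)
    (h : z = a * z + c) : z ≤ a∗ * c := by
  have key : ∀ n (x : List α), x.length ≤ n → x ∈ z → x ∈ a∗ * c := by
    intro n
    induction n with
    | zero =>
      intro x hlen hx
      rw [h] at hx
      rcases hx with hx | hx
      · obtain ⟨u, hu, v, hv, rfl⟩ := hx
        have : u = [] := by
          cases u with
          | nil => rfl
          | cons hd tl => simp at hlen
        exact absurd (this ▸ hu) ha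
      · exact ⟨[], Language.nil_mem_kstar a, x, hx, rfl⟩
    | succ n ih =>
      intro x hlen hx
      rw [h] at hx
      rcases hx with hx | hx
      · obtain ⟨u, hu, v, hv, rfl⟩ := hx
        have hune : u ≠ [] := by rintro rfl; exact ha hu
        have hvlen : v.length ≤ n := by
          have : 1 ≤ u.length := List.length_pos_iff.mpr hune
          simp at hlen; omega
        obtain ⟨p, hp, q, hq, rfl⟩ := ih v hvlen hv
        exact ⟨u ++ p, (mul_kstar_le_kstar : a * a∗ ≤ a∗) ⟨u, hu, p, hp, rfl⟩, q, hq, by simp⟩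
      · exact ⟨[], Language.nil_mem_kstar a, x, hx, rfl⟩
  intro x hx
  exact key x.length x le_rfl hx

theorem stmt_10 {α : Type*} (a b s z : Language α) (ha : [] ∉ a) :
    z = a * z + z * b + s ↔ z = a∗ * (z * b + s) := by
  constructor
  · intro h
    have h' : z = a * z + (z * b + s) := h.trans (add_assoc _ _ _)
    apply le_antisymm
    · exact arden_aux a (z * b + s) z ha h'
    · have h1 : a * z ≤ z := by
        conv_rhs => rw [h']
        exact le_self_add
      have h2 : a∗ * z ≤ z := kstar_mul_le_self h1
      calc a∗ * (z * b + s) ≤ a∗ * z := by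
            apply mul_le_mul_right
            conv_rhs => rw [h']
            exact le_add_self
        _ ≤ z := h2
  · intro h
    calc z = a∗ * (z * b + s) := h
      _ = (1 + a * a∗) * (z * b + s) := by
          rw [Language.one_add_self_mul_kstar_eq_kstar]
      _ = a * z + z * b + s := by
          rw [add_mul, one_mul, mul_assoc, ← h]; abel
end

section
/- The least fixed point of the monotone map F(r) = a·r + r·b + s on the complete lattice of languages over α equals a∗·s·b∗. -/
open Computability

theorem stmt_13 {α : Type*} (a b s : Language α)
    (F : Language α →o Language α)
    (hF : ∀ r, F r = a * r + r * b + s) :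
    OrderHom.lfp F = a∗ * s * b∗ := by
  apply le_antisymm
  · apply OrderHom.lfp_le
    rw [hF]
    refine sup_le (sup_le ?_ ?_) ?_
    · calc a * (a∗ * s * b∗) = (a * a∗) * s * b∗ := by noncomm_ring
        _ ≤ a∗ * s * b∗ := by
          gcongr
          exact mul_kstar_le_kstar
    · calc a∗ * s * b∗ * b = a∗ * s * (b∗ * b) := by noncomm_ring
        _ ≤ a∗ * s * b∗ := by
          gcongr
          exact kstar_mul_le_kstar
    · calc s = 1 * s * 1 := by noncomm_ring
        _ ≤ a∗ * s * b∗ := by gcongr <;> exact one_le_kstar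
  · have hfix : F (OrderHom.lfp F) = OrderHom.lfp F := OrderHom.map_lfp F
    rw [hF] at hfix
    set L := OrderHom.lfp F
    have h1 : a * L ≤ L := le_trans (le_sup_left.trans le_sup_left) hfix.le
    have h2 : L * b ≤ L := le_trans (le_sup_right.trans le_sup_left) hfix.le
    have h3 : s ≤ L := le_trans le_sup_right hfix.le
    calc a∗ * s * b∗ ≤ a∗ * L * b∗ := by gcongr
      _ ≤ L * b∗ := by gcongr ?_ * _; exact kstar_mul_le_self h1
      _ ≤ L := mul_kstar_le_self h2
end
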